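/- Let a, b, c be positive integers and p ≥ 0 an integer. If a ≥ c + 1, then ⟨a, b, b, …, b, c⟩ ≤ ⟨a−1, b, b, …, b, c+1⟩ (with p copies of b in the middle of each continuant). If moreover a > c + 1, then this inequality is strict. -/

import Mathlib

/-- The continuant of a finite sequence of positive integers. -/
def contnt : List ℕ → ℕ
  | [] => 1
  | [a] => a
  | a :: b :: l => a * contnt (b :: l) + contnt l

/-!
Continuants are affine in each end entry: raising the first entry by `y` adds `y⟨M⟩`, and raising
the last one does the same by the reversal symmetry `⟨l.reverse⟩ = ⟨l⟩`. Writing `a = x + 1`,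
moving one unit from the first entry to the last therefore changes `⟨x + 1, M, c⟩` by
`⟨x, M⟩ - ⟨M, c⟩`, and for a palindromic middle block `M` this is `⟨x, M⟩ - ⟨c, M⟩ = (x - c)⟨M⟩`.
-/

theorem contnt_cons_cons (a b : ℕ) (l : List ℕ) :
    contnt (a :: b :: l) = a * contnt (b :: l) + contnt l := rfl

theorem contnt_pos {l : List ℕ} (hl : ∀ x ∈ l, 0 < x) : 0 < contnt l := by
  induction l using contnt.induct with
  | case1 => exact Nat.one_pos
  | case2 a => simpa [contnt] using hl
  | case3 a b l _ ih => exact Nat.add_pos_right _ (ih fun x hx => hl x (by simp [hx]))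

theorem contnt_append_pair (l : List ℕ) (y z : ℕ) :
    contnt (l ++ [y, z]) = z * contnt (l ++ [y]) + contnt l := by
  induction l using contnt.induct with
  | case1 => simp only [List.nil_append, contnt_cons_cons, contnt]; ring
  | case2 a => simp only [List.cons_append, List.nil_append, contnt_cons_cons, contnt]; ring
  | case3 a b l ih₁ ih₂ =>
    simp only [List.cons_append] at ih₁ ⊢
    rw [contnt_cons_cons, contnt_cons_cons, ih₁, ih₂, contnt_cons_cons]
    ring

theorem contnt_reverse (l : List ℕ) : contnt l.reverse = contnt l := by
  induction l using contnt.induct with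
  | case1 | case2 => rfl
  | case3 a b l ih₁ ih₂ =>
    rw [List.reverse_cons, List.reverse_cons, List.append_assoc, List.singleton_append,
      contnt_append_pair, ← List.reverse_cons, ih₁, ih₂, contnt_cons_cons]

theorem contnt_cons_add (x y : ℕ) (l : List ℕ) :
    contnt ((x + y) :: l) = contnt (x :: l) + y * contnt l := by
  cases l with
  | nil => simp [contnt]
  | cons b l => simp only [contnt_cons_cons]; ring

theorem contnt_append_add (l : List ℕ) (x y : ℕ) :
    contnt (l ++ [x + y]) = contnt (l ++ [x]) + y * contnt l := by
  simpa only [← contnt_reverse (_ ++ [_]), List.reverse_append, List.reverse_singleton,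
    List.singleton_append, contnt_reverse] using contnt_cons_add x y l.reverse

theorem contnt_cons_append_shift {M : List ℕ} (hM : M.reverse = M) {x c : ℕ} (hc : c ≤ x) :
    contnt (x :: (M ++ [c + 1])) = contnt ((x + 1) :: (M ++ [c])) + (x - c) * contnt M := by
  have hlast : contnt (x :: (M ++ [c + 1])) = contnt (x :: (M ++ [c])) + contnt (x :: M) :=
    by simpa using contnt_append_add (x :: M) c 1
  have hfirst : contnt ((x + 1) :: (M ++ [c])) = contnt (x :: (M ++ [c])) + contnt (M ++ [c]) :=
    by simpa using contnt_cons_add x 1 (M ++ [c])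
  have hsymm : contnt (M ++ [c]) = contnt (c :: M) := by
    rw [← contnt_reverse, List.reverse_append, hM, List.reverse_singleton, List.singleton_append]
  have hhead : contnt (x :: M) = contnt (c :: M) + (x - c) * contnt M := by
    rw [← contnt_cons_add, Nat.add_sub_cancel' hc]
  omega

theorem stmt_17_general (a b c p : ℕ) (hb : 1 ≤ b)
    (h : c + 1 ≤ a) :
    contnt (a :: (List.replicate p b ++ [c])) ≤
      contnt ((a - 1) :: (List.replicate p b ++ [c + 1])) ∧
    (c + 1 < a →
      contnt (a :: (List.replicate p b ++ [c])) <
        contnt ((a - 1) :: (List.replicate p b ++ [c + 1]))) := by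
  obtain ⟨x, rfl⟩ : ∃ x, a = x + 1 := ⟨a - 1, by omega⟩
  rw [Nat.add_sub_cancel,
    contnt_cons_append_shift List.reverse_replicate (Nat.le_of_succ_le_succ h)]
  refine ⟨Nat.le_add_right _ _, fun hlt => Nat.lt_add_of_pos_right (Nat.mul_pos (by omega) ?_)⟩
  exact contnt_pos fun y hy => (List.eq_of_mem_replicate hy).symm ▸ hb

/-- Lemma 16: for positive integers `a,b,c` and `p ≥ 0`, if
`a ≥ c+1` then `⟨a, b^{p}, c⟩ ≤ ⟨a−1, b^{p}, c+1⟩`, strictly if `a > c+1`. -/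
theorem stmt_17 (a b c p : ℕ) (ha : 1 ≤ a) (hb : 1 ≤ b) (hc : 1 ≤ c)
    (h : c + 1 ≤ a) :
    contnt (a :: (List.replicate p b ++ [c])) ≤
      contnt ((a - 1) :: (List.replicate p b ++ [c + 1])) ∧
    (c + 1 < a →
      contnt (a :: (List.replicate p b ++ [c])) <
        contnt ((a - 1) :: (List.replicate p b ++ [c + 1]))) :=
  stmt_17_general a b c p hb h
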